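/- Let f : ℝ → ℝ be a strictly increasing bijection and let A ⊆ ℝ be a closed, discrete subset that is unbounded above and unbounded below. If f(A) = A and f fixes some point a₀ ∈ A, then f fixes every point of A. -/

import Mathlib

/-!
A closed discrete subset of `ℝ` meets every compact interval in a finite set. Since `f` is
increasing, fixes `a₀` and maps `A` onto `A`, it maps `A ∩ [a₀, a]` bijectively onto
`A ∩ [a₀, f a]`. These two finite sets are nested and have the same cardinality, so they coincide,
which forces `f a = a`. Points below `a₀` are handled by passing to the order dual.
-/

open Set OrderDual

theorem IsClosed.finite_inter_of_isDiscrete {X : Type*} [TopologicalSpace X] {s K : Set X}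
    (hs : IsClosed s) (hd : IsDiscrete s) (hK : IsCompact K) : (s ∩ K).Finite :=
  (hK.inter_left hs).finite (hd.mono inter_subset_left)

section LinearOrder

variable {α : Type*} [LinearOrder α] {f : α → α} {s : Set α}

theorem StrictMono.image_inter_Icc (hf : StrictMono f) (hs : f '' s = s) (a b : α) :
    f '' (s ∩ Icc a b) = s ∩ Icc (f a) (f b) := by
  ext y
  constructor
  · rintro ⟨x, ⟨hx, hax, hxb⟩, rfl⟩
    exact ⟨hs ▸ mem_image_of_mem f hx, hf.monotone hax, hf.monotone hxb⟩
  · rintro ⟨hy, hay, hyb⟩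
    obtain ⟨x, hx, rfl⟩ := hs.symm ▸ hy
    exact ⟨x, ⟨hx, hf.le_iff_le.1 hay, hf.le_iff_le.1 hyb⟩, rfl⟩

theorem inter_Icc_eq_of_ncard_eq (hfin : ∀ a b, (s ∩ Icc a b).Finite) {c x y : α}
    (h : (s ∩ Icc c x).ncard = (s ∩ Icc c y).ncard) : s ∩ Icc c x = s ∩ Icc c y := by
  wlog hxy : x ≤ y generalizing x y
  · exact (this h.symm (le_of_not_ge hxy)).symm
  exact eq_of_subset_of_ncard_le (inter_subset_inter_right _ (Icc_subset_Icc_right hxy))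
    h.ge (hfin c y)

theorem StrictMono.apply_eq_self_of_le (hf : StrictMono f) (hs : f '' s = s)
    (hfin : ∀ a b, (s ∩ Icc a b).Finite) {a₀ : α} (hfix : f a₀ = a₀) {a : α} (ha : a ∈ s)
    (h : a₀ ≤ a) : f a = a := by
  have hcard : (s ∩ Icc a₀ a).ncard = (s ∩ Icc a₀ (f a)).ncard := by
    rw [← hfix, ← hf.image_inter_Icc hs, ncard_image_of_injective _ hf.injective, hfix]
  have heq := inter_Icc_eq_of_ncard_eq hfin hcard
  have hfa : f a ∈ s := hs ▸ mem_image_of_mem f ha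
  have ha_le : a ≤ f a := (heq ▸ ⟨ha, h, le_rfl⟩ : a ∈ s ∩ Icc a₀ (f a)).2.2
  have hfa_le : f a ≤ a :=
    (heq ▸ ⟨hfa, hfix ▸ hf.monotone h, le_rfl⟩ : f a ∈ s ∩ Icc a₀ a).2.2
  exact le_antisymm hfa_le ha_le

theorem StrictMono.eqOn_id_of_image_eq (hf : StrictMono f) (hs : f '' s = s)
    (hfin : ∀ a b, (s ∩ Icc a b).Finite) {a₀ : α} (hfix : f a₀ = a₀) : EqOn f id s := by
  intro a ha
  rcases le_total a₀ a with h | h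
  · exact hf.apply_eq_self_of_le hs hfin hfix ha h
  · have hfd : StrictMono (toDual ∘ f ∘ ofDual) := hf.dual
    have hsd : (toDual ∘ f ∘ ofDual) '' (ofDual ⁻¹' s) = ofDual ⁻¹' s := hs
    have hfind : ∀ a b : αᵒᵈ, (ofDual ⁻¹' s ∩ Icc a b).Finite := fun a b =>
      (hfin (ofDual b) (ofDual a)).subset fun _ hx => ⟨hx.1, hx.2.2, hx.2.1⟩
    exact hfd.apply_eq_self_of_le hsd hfind (a₀ := toDual a₀) hfix (a := toDual a) ha h

end LinearOrder

theorem stmt_2_general (f : ℝ → ℝ) (hmono : StrictMono f)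
    (A : Set ℝ) (hclosed : IsClosed A)
    (hdisc : ∀ a ∈ A, ∃ U : Set ℝ, IsOpen U ∧ a ∈ U ∧ U ∩ A = {a})
    (hinv : f '' A = A) (a₀ : ℝ) (hfix : f a₀ = a₀) :
    ∀ a ∈ A, f a = a := by
  have hA : IsDiscrete A := isDiscrete_iff_forall_mem_exists_isOpen.2 fun a ha =>
    let ⟨U, hU, _, hUA⟩ := hdisc a ha
    ⟨U, hU, hUA⟩
  exact hmono.eqOn_id_of_image_eq hinv
    (fun a b => hclosed.finite_inter_of_isDiscrete hA isCompact_Icc) hfix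

theorem stmt_2 (f : ℝ → ℝ) (hmono : StrictMono f) (hbij : Function.Bijective f)
    (A : Set ℝ) (hclosed : IsClosed A)
    (hdisc : ∀ a ∈ A, ∃ U : Set ℝ, IsOpen U ∧ a ∈ U ∧ U ∩ A = {a})
    (habove : ¬ BddAbove A) (hbelow : ¬ BddBelow A)
    (hinv : f '' A = A) (a₀ : ℝ) (ha₀ : a₀ ∈ A) (hfix : f a₀ = a₀) :
    ∀ a ∈ A, f a = a :=
  stmt_2_general f hmono A hclosed hdisc hinv a₀ hfix
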